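/- arXiv:2511.07639 — 2 statements merged into one kernel-verified Lean document; each statement's English description precedes it below -/
import Mathlib

section
/- Let I be an ideal of K[x_1,...,x_n] generated by polynomials of degree at most d_1, and suppose X ⊆ K^n is defined by parameters u_1,...,u_{n−m} with deg u_i ≤ d_2. If D is any derivation from the generating set of the logarithmic derivation module (consisting of u_i ∂'_{u_j}, x_j ∂_{x_j} for exceptional coordinates, and ∂'_{u_j} otherwise, where ∂'_{u_j} are obtained from ∂_{x_i} via the adjugate of the Jacobian matrix (∂u_j/∂x_i)), then the ideal D(I) + I is generated by elements of degree at most d_1 + n(d_2 − 1). -/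
/-!
Every generator `D` has the form `g ↦ ∑ₖ cₖ ∂g/∂x_k` with coefficients of degree at most
`n(d₂ − 1) + 1`: the entries of `adj((∂u_j/∂x_i))` are `(n − 1) × (n − 1)` minors of a matrix whose
entries have degree `≤ d₂ − 1`, and the extra factor is `u_i` (degree `≤ d₂`) or `x_j`. As `∂_{x_k}`
lowers the degree by one, `D g` has degree at most `d₁ + n(d₂ − 1)` for every generator `g` of `I`,
so `D '' G ∪ G` is itself a generating set of the required degree.
-/

open MvPolynomial

/-- The Jacobian matrix `(∂u_j/∂x_i)_{ij}`. -/
noncomputable def jacMat {K : Type*} [Field K] {n : ℕ} (u : Fin n → MvPolynomial (Fin n) K) :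
    Matrix (Fin n) (Fin n) (MvPolynomial (Fin n) K) :=
  fun i j => pderiv i (u j)

/-- The derivation `∂'_{u_j}`, the `j`-th entry of `adj((∂u_j/∂x_i)) · (∂_{x_i})_i`. -/
noncomputable def dPrime {K : Type*} [Field K] {n : ℕ} (u : Fin n → MvPolynomial (Fin n) K)
    (j : Fin n) (g : MvPolynomial (Fin n) K) : MvPolynomial (Fin n) K :=
  ∑ i, (jacMat u).adjugate j i * pderiv i g

namespace MvPolynomial

variable {R σ : Type*} [CommRing R]

theorem totalDegree_pderiv_le (i : σ) (f : MvPolynomial σ R) :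
    (pderiv i f).totalDegree ≤ f.totalDegree - 1 := by
  classical
  conv_lhs => rw [f.as_sum]
  rw [map_sum]
  refine totalDegree_finsetSum_le fun v hv => ?_
  rw [pderiv_monomial]
  by_cases hvi : v i = 0
  · simp [hvi]
  have hle : Finsupp.single i 1 ≤ v :=
    Finsupp.single_le_iff.mpr (Nat.one_le_iff_ne_zero.mpr hvi)
  have hdeg : (v - Finsupp.single i 1).degree + (Finsupp.single i 1).degree = v.degree := by
    rw [← map_add, tsub_add_cancel_of_le hle]
  have hv_le : v.degree ≤ f.totalDegree := le_totalDegree hv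
  rw [Finsupp.degree_single] at hdeg
  refine (totalDegree_monomial_le _ _).trans ?_
  change (v - Finsupp.single i 1).degree ≤ _
  omega

theorem totalDegree_mul_pderiv_le (c g : MvPolynomial σ R) (i : σ) :
    (c * pderiv i g).totalDegree ≤ c.totalDegree + g.totalDegree - 1 := by
  by_cases hg : g.totalDegree = 0
  · rw [totalDegree_eq_zero_iff_eq_C.mp hg, pderiv_C, mul_zero, totalDegree_zero]
    exact Nat.zero_le _
  · have := totalDegree_pderiv_le i g
    exact (totalDegree_mul _ _).trans (by omega)

theorem totalDegree_sum_mul_pderiv_le [Fintype σ] (c : σ → MvPolynomial σ R) {e : ℕ}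
    (hc : ∀ i, (c i).totalDegree ≤ e) (g : MvPolynomial σ R) :
    (∑ i, c i * pderiv i g).totalDegree ≤ e + g.totalDegree - 1 :=
  totalDegree_finsetSum_le fun i _ =>
    (totalDegree_mul_pderiv_le (c i) g i).trans (by have := hc i; omega)

variable {ι : Type*} [Fintype ι] [DecidableEq ι]

theorem totalDegree_det_le (M : Matrix ι ι (MvPolynomial σ R)) (b : ι → ℕ)
    (hb : ∀ i j, (M i j).totalDegree ≤ b i) : M.det.totalDegree ≤ ∑ i, b i := by
  rw [Matrix.det_apply']
  refine totalDegree_finsetSum_le fun π _ => (totalDegree_mul _ _).trans ?_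
  rw [← map_intCast (C : R →+* MvPolynomial σ R), totalDegree_C, zero_add]
  calc (∏ i, M (π i) i).totalDegree ≤ ∑ i, (M (π i) i).totalDegree := totalDegree_finsetProd _ _
    _ ≤ ∑ i, b (π i) := Finset.sum_le_sum fun i _ => hb (π i) i
    _ = ∑ i, b i := Equiv.sum_comp π b

theorem totalDegree_adjugate_le (M : Matrix ι ι (MvPolynomial σ R)) {d : ℕ}
    (hM : ∀ i j, (M i j).totalDegree ≤ d) (i j : ι) :
    (M.adjugate i j).totalDegree ≤ (Fintype.card ι - 1) * d := by
  rw [Matrix.adjugate_apply]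
  refine (totalDegree_det_le _ (Function.update (fun _ => d) j 0) fun k l => ?_).trans ?_
  · rcases eq_or_ne k j with rfl | hk
    · rw [Matrix.updateRow_self, Function.update_self, Pi.single_apply]
      split_ifs <;> simp
    · rw [Matrix.updateRow_ne hk, Function.update_of_ne hk]
      exact hM k l
  · rw [Finset.sum_update_of_mem (Finset.mem_univ j), Finset.sum_const, Finset.card_sdiff,
      Finset.card_univ]
    simp

end MvPolynomial

section

variable {K : Type*} [Field K] {n d : ℕ} {u : Fin n → MvPolynomial (Fin n) K}

theorem totalDegree_jacMat_le (hu : ∀ i, (u i).totalDegree ≤ d) (i j : Fin n) :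
    (jacMat u i j).totalDegree ≤ d - 1 :=
  (totalDegree_pderiv_le i (u j)).trans (Nat.sub_le_sub_right (hu j) 1)

theorem totalDegree_adjugate_jacMat_le (hu : ∀ i, (u i).totalDegree ≤ d) (i j : Fin n) :
    ((jacMat u).adjugate i j).totalDegree ≤ (n - 1) * (d - 1) := by
  simpa using totalDegree_adjugate_le (jacMat u) (totalDegree_jacMat_le hu) i j

theorem totalDegree_dPrime_le (hu : ∀ i, (u i).totalDegree ≤ d) (j : Fin n)
    (g : MvPolynomial (Fin n) K) :
    (dPrime u j g).totalDegree ≤ (n - 1) * (d - 1) + g.totalDegree - 1 :=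
  totalDegree_sum_mul_pderiv_le _ (totalDegree_adjugate_jacMat_le hu j) g

theorem totalDegree_mul_dPrime_le (hu : ∀ i, (u i).totalDegree ≤ d) (i j : Fin n)
    (g : MvPolynomial (Fin n) K) :
    (u i * dPrime u j g).totalDegree ≤ n * (d - 1) + g.totalDegree := by
  have hsum : u i * dPrime u j g = ∑ k, (u i * (jacMat u).adjugate j k) * pderiv k g := by
    simp only [dPrime, Finset.mul_sum, mul_assoc]
  have hn : (n - 1) * (d - 1) + (d - 1) = n * (d - 1) := by
    rw [← Nat.succ_mul, Nat.succ_eq_add_one, Nat.sub_add_cancel i.pos]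
  rw [hsum]
  refine (totalDegree_sum_mul_pderiv_le _ (fun k => (totalDegree_mul _ _).trans
    (add_le_add (hu i) (totalDegree_adjugate_jacMat_le hu j k))) g).trans ?_
  omega

end

theorem log_derivative_ideal_degree_bound_general {K : Type*} [Field K]
    {n m d₁ d₂ : ℕ}
    (u : Fin n → MvPolynomial (Fin n) K) (hu : ∀ i, (u i).totalDegree ≤ d₂)
    (Exc : Set (Fin n))
    (G : Set (MvPolynomial (Fin n) K)) (hG : ∀ g ∈ G, g.totalDegree ≤ d₁)
    (D : MvPolynomial (Fin n) K → MvPolynomial (Fin n) K)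
    (hD : (∃ i j : Fin n, (i : ℕ) < n - m ∧ (j : ℕ) < n - m ∧
            D = fun g => u i * dPrime u j g)
        ∨ (∃ j ∈ Exc, D = fun g => X j * pderiv j g)
        ∨ (∃ j : Fin n, n - m ≤ (j : ℕ) ∧ j ∉ Exc ∧ D = fun g => dPrime u j g)) :
    ∃ S : Set (MvPolynomial (Fin n) K),
      (∀ h ∈ S, h.totalDegree ≤ d₁ + n * (d₂ - 1)) ∧
      Ideal.span S = Ideal.span (D '' G ∪ G) := by
  refine ⟨D '' G ∪ G, ?_, rfl⟩
  rintro h (⟨g, hgG, rfl⟩ | hhG)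
  · have hg := hG g hgG
    rcases hD with ⟨i, j, -, -, rfl⟩ | ⟨j, -, rfl⟩ | ⟨j, -, -, rfl⟩ <;> dsimp only
    · have := totalDegree_mul_dPrime_le hu i j g
      omega
    · have := totalDegree_mul_pderiv_le (X j) g j
      rw [totalDegree_X] at this
      omega
    · have := totalDegree_dPrime_le hu j g
      have := Nat.mul_le_mul_right (d₂ - 1) (Nat.sub_le n 1)
      omega
  · exact (hG h hhG).trans (Nat.le_add_right _ _)

theorem log_derivative_ideal_degree_bound {K : Type*} [Field K] [CharZero K]
    {n m d₁ d₂ : ℕ} (hm : m ≤ n)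
    (u : Fin n → MvPolynomial (Fin n) K) (hu : ∀ i, (u i).totalDegree ≤ d₂)
    (Exc : Set (Fin n)) (hExc : ∀ j ∈ Exc, u j = X j)
    (G : Set (MvPolynomial (Fin n) K)) (hG : ∀ g ∈ G, g.totalDegree ≤ d₁)
    (D : MvPolynomial (Fin n) K → MvPolynomial (Fin n) K)
    (hD : (∃ i j : Fin n, (i : ℕ) < n - m ∧ (j : ℕ) < n - m ∧
            D = fun g => u i * dPrime u j g)
        ∨ (∃ j ∈ Exc, D = fun g => X j * pderiv j g)
        ∨ (∃ j : Fin n, n - m ≤ (j : ℕ) ∧ j ∉ Exc ∧ D = fun g => dPrime u j g)) :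
    ∃ S : Set (MvPolynomial (Fin n) K),
      (∀ h ∈ S, h.totalDegree ≤ d₁ + n * (d₂ - 1)) ∧
      Ideal.span S = Ideal.span (D '' G ∪ G) :=
  log_derivative_ideal_degree_bound_general u hu Exc G hG D hD
end

section
/- Let I be a monomial ideal generated by ∏_{i=1}^r x_i^{α_i} in K[x_1,...,x_n], with marking μ and α_1 + ⋯ + α_r > μ. Let C = {x_l = 0 : l ∈ J} for a subset J with 0 ≤ Σ_{l∈J} α_l − μ < α_k for all k ∈ J. Then in the x_k-chart of the blowing-up with centre C (for k ∈ J), the controlled transform I' = I_{exceptional}^{−μ}·σ*(I) is generated by a monomial in which the exponent of the exceptional coordinate is Σ_{l∈J} α_l − μ, which is strictly less than α_k. -/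
/-!
STATEMENT 10: for the monomial ideal generated by `∏ x_i^{α_i}` with marking `μ`, and centre
`C = {x_l = 0 : l ∈ J}` with `0 ≤ Σ_{l∈J} α_l − μ < α_k` for all `k ∈ J`, in the `x_k`-chart of
the blowing-up (substitution `x_l ↦ x_k x_l` for `l ∈ J`, `l ≠ k`), the controlled transform
(pullback divided by the `μ`-th power of the exceptional coordinate `x_k`) is generated by a
monomial whose exponent at the exceptional coordinate is `Σ_{l∈J} α_l − μ`, strictly
less than `α_k`.
-/

open MvPolynomial

theorem controlled_transform_monomial {K : Type*} [CommRing K] {n : ℕ} (α : Fin n → ℕ)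
    (μ : ℕ) (J : Finset (Fin n)) (k : Fin n) (hk : k ∈ J)
    (h1 : μ ≤ ∑ l ∈ J, α l) (h2 : (∑ l ∈ J, α l) - μ < α k) :
    (aeval (fun l : Fin n => if l ∈ J ∧ l ≠ k then X k * X l else X l)
        (∏ i, (X i : MvPolynomial (Fin n) K) ^ α i)) =
      X k ^ μ *
        ∏ i, (X i : MvPolynomial (Fin n) K) ^ (if i = k then (∑ l ∈ J, α l) - μ else α i) ∧
    (∑ l ∈ J, α l) - μ < α k := by
  refine ⟨?_, h2⟩
  rw [map_prod]
  simp only [map_pow, aeval_X]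
  have key : ∀ i : Fin n,
      (if i ∈ J ∧ i ≠ k then X k * X i else (X i : MvPolynomial (Fin n) K)) ^ α i =
        X k ^ (if i ∈ J ∧ i ≠ k then α i else 0) * X i ^ α i := by
    intro i
    split_ifs with h
    · rw [mul_pow]
    · rw [pow_zero, one_mul]
  simp only [key]
  rw [Finset.prod_mul_distrib, Finset.prod_pow_eq_pow_sum]
  have hfilter : Finset.filter (fun i => i ∈ J ∧ i ≠ k) Finset.univ = J.erase k := by
    ext i; simp [Finset.mem_erase, and_comm]
  have hsum : (∑ i, if i ∈ J ∧ i ≠ k then α i else 0) = ∑ i ∈ J.erase k, α i := by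
    rw [← Finset.sum_filter, hfilter]
  have hJ : ∑ l ∈ J, α l = α k + ∑ i ∈ J.erase k, α i :=
    (Finset.add_sum_erase J α hk).symm
  rw [hsum, ← Finset.mul_prod_erase Finset.univ _ (Finset.mem_univ k),
      ← Finset.mul_prod_erase Finset.univ
        (fun i => (X i : MvPolynomial (Fin n) K) ^ (if i = k then (∑ l ∈ J, α l) - μ else α i))
        (Finset.mem_univ k)]
  have herase : ∏ i ∈ Finset.univ.erase k,
      (X i : MvPolynomial (Fin n) K) ^ (if i = k then (∑ l ∈ J, α l) - μ else α i) =
      ∏ i ∈ Finset.univ.erase k, (X i : MvPolynomial (Fin n) K) ^ α i := by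
    refine Finset.prod_congr rfl fun i hi => ?_
    rw [if_neg (Finset.mem_erase.mp hi).1]
  rw [herase, if_pos rfl]
  ring_nf
  rw [← pow_add, ← pow_add, add_comm, ← hJ, Nat.add_sub_cancel' h1]
end
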